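/- arXiv:1912.06229 — 2 statements merged into one kernel-verified Lean document; each statement's English description precedes it below -/
import Mathlib

section
/- Let u : Λ × Λ → ℝ and φ : Λ → ℝ, and define the payoff J(λ, λ̂) = u(λ, λ̂) − φ(λ̂) of an agent of true type λ reporting λ̂. If the payment rule is constructed as φ(λ̂) = u(λ̂, λ̂) − ∫_{λ̲}^{λ̂} D(x) dx − c where D(x) = ∂₁u(x, x) (the partial derivative in the first argument evaluated on the diagonal), c is a constant, u is continuously differentiable, and for every fixed λ the map λ̂ ↦ u(λ, λ̂) satisfies the single-crossing condition ∂₁u(λ, λ̂) nondecreasing in λ̂, then truthful reporting is optimal: J(λ, λ) ≥ J(λ, λ̂) for all λ, λ̂ ∈ Λ. -/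
open Set intervalIntegral

/-- the payment rule constructed from the envelope formula makes
truthful reporting optimal under the single-crossing condition. -/
theorem stmt_1 (lo hi : ℝ) (hlohi : lo ≤ hi)
    (u : ℝ → ℝ → ℝ) (u₁ : ℝ → ℝ → ℝ) (φ : ℝ → ℝ) (c : ℝ)
    -- u is continuously differentiable in its first argument, with partial derivative u₁
    (hderiv : ∀ lam lamhat : ℝ, HasDerivAt (fun t => u t lamhat) (u₁ lam lamhat) lam)
    (hcont : Continuous fun p : ℝ × ℝ => u₁ p.1 p.2)
    -- single-crossing: ∂₁u(λ, λ̂) nondecreasing in the report λ̂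
    (hsc : ∀ lam : ℝ, Monotone fun lamhat => u₁ lam lamhat)
    -- payment rule: φ(λ̂) = u(λ̂,λ̂) − ∫_{lo}^{λ̂} D(x) dx − c, with D(x) = u₁(x,x)
    (hφ : ∀ lamhat : ℝ, φ lamhat = u lamhat lamhat - (∫ x in lo..lamhat, u₁ x x) - c) :
    ∀ lam ∈ Icc lo hi, ∀ lamhat ∈ Icc lo hi,
      u lam lam - φ lam ≥ u lam lamhat - φ lamhat := by
  intro lam _ lamhat _
  have hcd : Continuous fun x : ℝ => u₁ x x :=
    hcont.comp (continuous_id.prodMk continuous_id)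
  have hcf : ∀ b : ℝ, Continuous fun x : ℝ => u₁ x b := fun b =>
    hcont.comp (continuous_id.prodMk continuous_const)
  have hid : ∀ a b : ℝ, IntervalIntegrable (fun x => u₁ x x) MeasureTheory.volume a b :=
    fun a b => hcd.intervalIntegrable a b
  have hif : ∀ a b c : ℝ, IntervalIntegrable (fun x => u₁ x c) MeasureTheory.volume a b :=
    fun a b c => (hcf c).intervalIntegrable a b
  -- FTC: u lam lamhat - u lamhat lamhat = ∫_{lamhat}^{lam} u₁ x lamhat
  have hftc : u lam lamhat - u lamhat lamhat = ∫ x in lamhat..lam, u₁ x lamhat := by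
    rw [intervalIntegral.integral_eq_sub_of_hasDerivAt
      (fun x _ => hderiv x lamhat) (hif lamhat lam lamhat)]
  -- integral splitting
  have hsplit : (∫ x in lo..lam, u₁ x x) - (∫ x in lo..lamhat, u₁ x x)
      = ∫ x in lamhat..lam, u₁ x x :=
    intervalIntegral.integral_interval_sub_left (hid lo lam) (hid lo lamhat)
  rw [hφ, hφ]
  have key : (∫ x in lamhat..lam, u₁ x lamhat) ≤ ∫ x in lamhat..lam, u₁ x x := by
    rcases le_total lamhat lam with h | h
    · apply intervalIntegral.integral_mono_on h (hif lamhat lam lamhat) (hid lamhat lam)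
      intro x hx
      exact hsc x hx.1
    · have aux : (∫ x in lam..lamhat, u₁ x x) ≤ ∫ x in lam..lamhat, u₁ x lamhat := by
        apply intervalIntegral.integral_mono_on h (hid lam lamhat) (hif lam lamhat lamhat)
        intro x hx
        exact hsc x hx.2
      have e1 : (∫ x in lamhat..lam, u₁ x lamhat) = -∫ x in lam..lamhat, u₁ x lamhat :=
        intervalIntegral.integral_symm _ _
      have e2 : (∫ x in lamhat..lam, u₁ x x) = -∫ x in lam..lamhat, u₁ x x :=
        intervalIntegral.integral_symm _ _
      linarith
  linarith [hftc, hsplit, key]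
end

section
/- Let the matching rule on side K be the cutoff rule σ^K(λ) = [τ^K(λ), λ̄^{K̄}] if λ ≥ δ^K and σ^K(λ) = ∅ otherwise, and symmetrically on side K̄. If (i) τ^K(λ) = inf{ y ∈ Λ^{K̄} : τ^{K̄}(y) ≤ λ }, (ii) δ^K = inf{ λ ∈ Λ^K : ∃ y ∈ Λ^{K̄}, τ^{K̄}(y) ≤ λ }, and (iii) τ^K and τ^{K̄} are nonincreasing, then the matching rule is reciprocal: λ^K ∈ σ^{K̄}(λ^{K̄}) if and only if λ^{K̄} ∈ σ^K(λ^K). -/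
open Set

/-- reciprocity of cut-off matching rules. -/
theorem stmt_4 (loK hiK loB hiB δK δB : ℝ) (τK τB : ℝ → ℝ)
    (hK : loK ≤ hiK) (hB : loB ≤ hiB)
    (hδK : δK ∈ Icc loK hiK) (hδB : δB ∈ Icc loB hiB)
    (hτKr : ∀ lam ∈ Icc loK hiK, τK lam ∈ Icc loB hiB)
    (hτBr : ∀ lam ∈ Icc loB hiB, τB lam ∈ Icc loK hiK)
    -- (i) each cutoff function is the generalized inverse of the other
    (hiK' : ∀ lam ∈ Icc loK hiK, τK lam = sInf {y | y ∈ Icc loB hiB ∧ τB y ≤ lam})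
    (hiB' : ∀ lam ∈ Icc loB hiB, τB lam = sInf {y | y ∈ Icc loK hiK ∧ τK y ≤ lam})
    -- (ii) thresholds
    (hiiK : δK = sInf {lam | lam ∈ Icc loK hiK ∧ ∃ y ∈ Icc loB hiB, τB y ≤ lam})
    (hiiB : δB = sInf {lam | lam ∈ Icc loB hiB ∧ ∃ y ∈ Icc loK hiK, τK y ≤ lam})
    -- (iii) cutoff functions are nonincreasing
    (hiiiK : AntitoneOn τK (Icc loK hiK))
    (hiiiB : AntitoneOn τB (Icc loB hiB)) :
    ∀ a ∈ Icc loK hiK, ∀ b ∈ Icc loB hiB,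
      (a ∈ (if δB ≤ b then Icc (τB b) hiK else (∅ : Set ℝ))) ↔
      (b ∈ (if δK ≤ a then Icc (τK a) hiB else (∅ : Set ℝ))) := by
  intro a ha b hb
  constructor
  · intro hmem
    by_cases h1 : δB ≤ b
    · rw [if_pos h1] at hmem
      have hτ : τB b ≤ a := hmem.1
      have hδKa : δK ≤ a := by
        rw [hiiK]
        exact csInf_le ⟨loK, fun x hx => hx.1.1⟩ ⟨ha, b, hb, hτ⟩
      have hτKa : τK a ≤ b := by
        rw [hiK' a ha]
        exact csInf_le ⟨loB, fun x hx => hx.1.1⟩ ⟨hb, hτ⟩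
      rw [if_pos hδKa]
      exact ⟨hτKa, hb.2⟩
    · rw [if_neg h1] at hmem
      exact absurd hmem (notMem_empty a)
  · intro hmem
    by_cases h1 : δK ≤ a
    · rw [if_pos h1] at hmem
      have hτ : τK a ≤ b := hmem.1
      have hδBb : δB ≤ b := by
        rw [hiiB]
        exact csInf_le ⟨loB, fun x hx => hx.1.1⟩ ⟨hb, a, ha, hτ⟩
      have hτBb : τB b ≤ a := by
        rw [hiB' b hb]
        exact csInf_le ⟨loK, fun x hx => hx.1.1⟩ ⟨ha, hτ⟩
      rw [if_pos hδBb]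
      exact ⟨hτBb, ha.2⟩
    · rw [if_neg h1] at hmem
      exact absurd hmem (notMem_empty b)
end
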